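/- Let G be a graph with a c-deletion set D' of size at most k, and let D be any subset of D_G^{k+c} (the vertices of degree at least k+c). Then every connected component of G \ D either has at most c vertices or has a c-deletion set of size at most k − |D|, and at most k − |D| components of G \ D have more than c vertices. -/

import Mathlib

/-- Reachability within the vertex subset `S` using the adjacency relation `R`. -/
def RelReachIn {W : Type*} (R : W → W → Prop) (S : Set W) : W → W → Prop :=
  Relation.ReflTransGen (fun x y => x ∈ S ∧ y ∈ S ∧ R x y)

/-- The connected component, inside the induced subgraph on `S`, containing `a`. -/
def RelCompIn {W : Type*} (R : W → W → Prop) (S : Set W) (a : W) : Set W :=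
  {b | b ∈ S ∧ RelReachIn R S a b}

/-!
A vertex `v ∉ D'` of degree at least `k + c` keeps at least `c` of its neighbours outside `D'`,
so its component in `G \ D'` would have more than `c` vertices; hence `D ⊆ D'`. For a
component `C` of `G \ D`, the set `C ∩ D'` is then a `c`-deletion set of `C` of size at most
`|D' \ D| = |D'| - |D|`. Finally, a component of `G \ D` disjoint from `D'` is contained in a
component of `G \ D'`, so each component with more than `c` vertices contains a vertex of
`D' \ D` and there are at most `|D' \ D|` of them.
-/

section RelCompIn

variable {W : Type*} {R : W → W → Prop} {S T : Set W} {a b : W}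

lemma relReachIn_symm [Std.Symm R] (h : RelReachIn R S a b) : RelReachIn R S b a :=
  have : Std.Symm fun x y : W => x ∈ S ∧ y ∈ S ∧ R x y :=
    ⟨fun _ _ h => ⟨h.2.1, h.1, symm h.2.2⟩⟩
  Relation.ReflTransGen.stdSymm.symm _ _ h

lemma relCompIn_subset : RelCompIn R S a ⊆ S := fun _ hb => hb.1

lemma mem_relCompIn_self (ha : a ∈ S) : a ∈ RelCompIn R S a := ⟨ha, .refl⟩

lemma relCompIn_eq_of_mem [Std.Symm R] (hb : b ∈ RelCompIn R S a) :
    RelCompIn R S b = RelCompIn R S a := by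
  ext x
  constructor
  · rintro ⟨hx, hbx⟩
    exact ⟨hx, hb.2.trans hbx⟩
  · rintro ⟨hx, hax⟩
    exact ⟨hx, (relReachIn_symm hb.2).trans hax⟩

lemma relCompIn_mono (hST : S ⊆ T) (a : W) : RelCompIn R S a ⊆ RelCompIn R T a :=
  fun _ hb => ⟨hST hb.1,
    Relation.ReflTransGen.mono (fun _ _ h => ⟨hST h.1, hST h.2.1, h.2.2⟩) _ _ hb.2⟩

lemma relCompIn_subset_relCompIn_of_subset (h : RelCompIn R S a ⊆ T) :
    RelCompIn R S a ⊆ RelCompIn R T a := by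
  rintro b hb
  refine ⟨h hb, ?_⟩
  obtain ⟨-, hab⟩ := hb
  induction hab with
  | refl => exact .refl
  | tail hax hxy ih => exact ih.tail ⟨h ⟨hxy.1, hax⟩, h ⟨hxy.2.1, hax.tail hxy⟩, hxy.2.2⟩

variable [Finite W] {D D' : Set W} {c : ℕ}

lemma ncard_relCompIn_diff_le (hD' : ∀ a ∉ D', (RelCompIn R D'ᶜ a).ncard ≤ c) (A : Set W) :
    ∀ b ∈ A \ D', (RelCompIn R (A \ D') b).ncard ≤ c := fun b hb =>
  (Set.ncard_le_ncard (relCompIn_mono (fun _ hx => hx.2) b)).trans (hD' b hb.2)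

lemma exists_mem_of_lt_ncard_relCompIn (hD' : ∀ a ∉ D', (RelCompIn R D'ᶜ a).ncard ≤ c)
    (ha : a ∈ S) (hlarge : c < (RelCompIn R S a).ncard) : ∃ x ∈ RelCompIn R S a, x ∈ D' := by
  by_contra! hdisj
  have haD' : a ∉ D' := hdisj a (mem_relCompIn_self ha)
  have hsub : RelCompIn R S a ⊆ RelCompIn R D'ᶜ a := relCompIn_subset_relCompIn_of_subset hdisj
  exact hlarge.not_ge ((Set.ncard_le_ncard hsub).trans (hD' a haD'))

lemma ncard_setOf_large_relCompIn_le [Std.Symm R]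
    (hD' : ∀ a ∉ D', (RelCompIn R D'ᶜ a).ncard ≤ c) :
    {C : Set W | (∃ a ∉ D, C = RelCompIn R Dᶜ a) ∧ c < C.ncard}.ncard ≤ (D' \ D).ncard := by
  calc _ ≤ (RelCompIn R Dᶜ '' (D' \ D)).ncard := Set.ncard_le_ncard ?_
    _ ≤ (D' \ D).ncard := Set.ncard_image_le
  rintro C ⟨⟨a, ha, rfl⟩, hlarge⟩
  obtain ⟨x, hxC, hxD'⟩ := exists_mem_of_lt_ncard_relCompIn hD' ha hlarge
  exact ⟨x, ⟨hxD', relCompIn_subset hxC⟩, relCompIn_eq_of_mem hxC⟩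

end RelCompIn

namespace SimpleGraph

variable {V : Type*} [Fintype V] (G : SimpleGraph V) [DecidableRel G.Adj]

lemma degree_lt_ncard_relCompIn_add_ncard {D : Set V} {v : V} (hv : v ∉ D) :
    G.degree v < (RelCompIn G.Adj Dᶜ v).ncard + D.ncard := by
  have hsub : insert v (G.neighborSet v) ⊆ RelCompIn G.Adj Dᶜ v ∪ D := by
    rintro x (rfl | hx)
    · exact .inl (mem_relCompIn_self hv)
    · by_cases hxD : x ∈ D
      · exact .inr hxD
      · exact .inl ⟨hxD, .single ⟨hv, hxD, hx⟩⟩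
  calc G.degree v < (insert v (G.neighborSet v)).ncard := by
        rw [Set.ncard_insert_of_notMem G.notMem_neighborSet_self, Set.ncard_eq_toFinset_card',
          Set.toFinset_card, card_neighborSet_eq_degree]
        exact Nat.lt_succ_self _
    _ ≤ (RelCompIn G.Adj Dᶜ v ∪ D).ncard := Set.ncard_le_ncard hsub
    _ ≤ _ := Set.ncard_union_le _ _

lemma setOf_add_le_degree_subset {D' : Set V} {c k : ℕ} (hD'card : D'.ncard ≤ k)
    (hD' : ∀ a ∉ D', (RelCompIn G.Adj D'ᶜ a).ncard ≤ c) :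
    {v | k + c ≤ G.degree v} ⊆ D' := by
  intro v hv
  by_contra hvD'
  have := G.degree_lt_ncard_relCompIn_add_ncard hvD'
  have := hD' v hvD'
  have : k + c ≤ G.degree v := hv
  omega

end SimpleGraph

theorem subset_of_high_degree_is_extended_deletion_set_general {V : Type*} [Fintype V]
    (G : SimpleGraph V) [DecidableRel G.Adj] (c k : ℕ)
    (D' : Set V) (hD'card : D'.ncard ≤ k)
    (hD'del : ∀ a ∉ D', (RelCompIn G.Adj D'ᶜ a).ncard ≤ c)
    (D : Set V) (hD : D ⊆ {v : V | k + c ≤ G.degree v}) :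
    (∀ a ∉ D, (RelCompIn G.Adj Dᶜ a).ncard ≤ c ∨
        ∃ S ⊆ RelCompIn G.Adj Dᶜ a, S.ncard ≤ k - D.ncard ∧
          ∀ b ∈ RelCompIn G.Adj Dᶜ a \ S,
            (RelCompIn G.Adj (RelCompIn G.Adj Dᶜ a \ S) b).ncard ≤ c) ∧
    {C : Set V | (∃ a ∉ D, C = RelCompIn G.Adj Dᶜ a) ∧ c < C.ncard}.ncard ≤ k - D.ncard := by
  have hDD' : D ⊆ D' := hD.trans (G.setOf_add_le_degree_subset hD'card hD'del)
  have hdiff : (D' \ D).ncard ≤ k - D.ncard := by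
    rw [Set.ncard_sdiff hDD']
    omega
  refine ⟨fun a _ => Or.inr ?_, ?_⟩
  · refine ⟨RelCompIn G.Adj Dᶜ a ∩ D', Set.inter_subset_left, ?_, ?_⟩
    · have hsub : RelCompIn G.Adj Dᶜ a ∩ D' ⊆ D' \ D := fun _ hx => ⟨hx.2, relCompIn_subset hx.1⟩
      exact (Set.ncard_le_ncard hsub).trans hdiff
    · rw [Set.sdiff_self_inter]
      exact ncard_relCompIn_diff_le hD'del _
  · have := G.symm
    exact (ncard_setOf_large_relCompIn_le hD'del).trans hdiff

theorem subset_of_high_degree_is_extended_deletion_set {V : Type*} [Fintype V]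
    (G : SimpleGraph V) [DecidableRel G.Adj] (c k : ℕ) (hc : 1 ≤ c)
    (D' : Set V) (hD'card : D'.ncard ≤ k)
    (hD'del : ∀ a ∉ D', (RelCompIn G.Adj D'ᶜ a).ncard ≤ c)
    (D : Set V) (hD : D ⊆ {v : V | k + c ≤ G.degree v}) :
    (∀ a ∉ D, (RelCompIn G.Adj Dᶜ a).ncard ≤ c ∨
        ∃ S ⊆ RelCompIn G.Adj Dᶜ a, S.ncard ≤ k - D.ncard ∧
          ∀ b ∈ RelCompIn G.Adj Dᶜ a \ S,
            (RelCompIn G.Adj (RelCompIn G.Adj Dᶜ a \ S) b).ncard ≤ c) ∧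
    {C : Set V | (∃ a ∉ D, C = RelCompIn G.Adj Dᶜ a) ∧ c < C.ncard}.ncard ≤ k - D.ncard :=
  subset_of_high_degree_is_extended_deletion_set_general G c k D' hD'card hD'del D hD
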